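/- arXiv:2010.05526 — 2 statements merged into one kernel-verified Lean document; each statement's English description precedes it below -/
import Mathlib

section
/- Fix an integer d ≥ 2 and a probability measure G on [0,∞) with bounded support. Let σ ∈ L^∞(ℝ^d → ℝ^d). Let ε > 0, let n ≥ 1, let x ∈ ℤ_n^d, let 1 ≤ n₀ ≤ n and set δ = n₀/n. Then π_{x,δ} maps ℤ_{n₀}^d bijectively onto ℤ_n^d and induces a bijection from 𝔼_{n₀}^d to 𝔼_n^d, and P(∃ f_n ∈ S_n(π_{x,δ}(𝔠)) : 𝔡(μ_n(f_n), σ𝟙_{π_{x,δ}(𝔠)} L^d) ≤ (1/2)(n₀/n)^{d+1} ε) ≤ P(∃ f_{n₀} ∈ S_{n₀}(𝔠) : 𝔡(μ_{n₀}(f_{n₀}), (σ∘π_{x,δ})𝟙_𝔠 L^d) ≤ ε). -/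
open MeasureTheory Filter Set
open scoped ENNReal Topology

namespace FPP

/-- `ℝ^d`, with Lebesgue measure `volume`. -/
abbrev Rd (d : ℕ) := Fin d → ℝ

/-- The Euclidean (ℓ²) norm on `Rd d`. -/
noncomputable def nrm2 {d : ℕ} (v : Rd d) : ℝ := Real.sqrt (∑ i, v i ^ 2)

/-- An edge of the rescaled lattice `𝔼_n^d`, encoded by the integer coordinates of its left
endpoint together with its direction: the edge `(z, i)` of `𝔼_n^d` joins `z/n` to `z/n + eᵢ/n`. -/
abbrev Edge (d : ℕ) := (Fin d → ℤ) × Fin d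

/-- The point `z / n` of the rescaled lattice `ℤ_n^d`. -/
noncomputable def pt {d : ℕ} (n : ℕ) (z : Fin d → ℤ) : Rd d := fun i => (z i : ℝ) / n

/-- `z + eᵢ` -/
def shift {d : ℕ} (z : Fin d → ℤ) (i : Fin d) : Fin d → ℤ := fun j => z j + if j = i then 1 else 0

/-- `z - eᵢ` -/
def unshift {d : ℕ} (z : Fin d → ℤ) (i : Fin d) : Fin d → ℤ := fun j => z j - if j = i then 1 else 0

/-- the `i`-th vector of the canonical basis of `ℝ^d` -/
noncomputable def bvec {d : ℕ} (i : Fin d) : Rd d := fun j => if j = i then 1 else 0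

/-- the center `c(e)` of an edge of `𝔼_n^d` -/
noncomputable def center {d : ℕ} (n : ℕ) (e : Edge d) : Rd d :=
  fun j => ((e.1 j : ℝ) + if j = e.2 then 1 / 2 else 0) / n

/-- A stream `f_n : 𝔼_n^d → ℝ^d`, encoded by its signed intensity `F e` along each edge `e`:
the vector value of the stream on `e` is `F e • bvec e.2`, automatically collinear with `e`. -/
abbrev Streamm (d : ℕ) := Edge d → ℝ

/-- the vector value `f_n(e)` of a stream on an edge -/
noncomputable def streamVec {d : ℕ} (F : Streamm d) (e : Edge d) : Rd d := F e • bvec e.2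

/-- The vector measure `μ_n(f_n) = n^{-d} ∑_e f_n(e) δ_{c(e)}` of a stream, as an
`ℝ^d`-valued set function. -/
noncomputable def streamMeas {d : ℕ} (n : ℕ) (F : Streamm d) : Set (Rd d) → Rd d :=
  fun A => ∑' e : Edge d, Set.indicator A (fun _ => ((n : ℝ) ^ d)⁻¹ • streamVec F e) (center n e)

/-- The node law at the lattice point `z/n` (scale invariant, hence stated on `ℤ^d`). -/
def nodeLaw {d : ℕ} (F : Streamm d) (z : Fin d → ℤ) : Prop :=
  ∑ i : Fin d, (F (z, i) - F (unshift z i, i)) = 0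

/-- Membership in the set `S_n(C)` of admissible streams through `C` (without prescribed sinks
and sources), for the capacities `c` : the capacity constraint `‖f_n(e)‖₂ ≤ t(e)` holds for
every edge whose left endpoint belongs to `C`, and the node law holds at every vertex `x` of
`ℤ_n^d ∩ C` such that `x - eᵢ/n ∈ C` for every `i`. -/
def memSnSet {d : ℕ} (n : ℕ) (c : Edge d → ℝ) (C : Set (Rd d)) (F : Streamm d) : Prop :=
  (∀ e : Edge d, pt n e.1 ∈ C → |F e| ≤ c e) ∧
  (∀ z : Fin d → ℤ, pt n z ∈ C → (∀ i : Fin d, pt n (unshift z i) ∈ C) → nodeLaw F z)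

/-- The translated dyadic cube `Q + x`, where `Q ∈ Δ_λ^k` is indexed by `w ∈ ℤ^d`,
`Q = 2^{-k} λ ([-1/2,1/2)^d + w)`. -/
def dyadicCube {d : ℕ} (k : ℕ) (lam : ℝ) (w : Fin d → ℤ) (x : Rd d) : Set (Rd d) :=
  {y | ∀ i, lam * (2 : ℝ)⁻¹ ^ k * ((w i : ℝ) - 1 / 2) + x i ≤ y i ∧
            y i < lam * (2 : ℝ)⁻¹ ^ k * ((w i : ℝ) + 1 / 2) + x i}

/-- The distance `𝔡` between two `ℝ^d`-valued set functions, with values in `[0,∞]`. -/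
noncomputable def ddist {d : ℕ} (ν μ : Set (Rd d) → Rd d) : ℝ≥0∞ :=
  ⨆ (x : Rd d) (_ : ∀ i, -1 ≤ x i ∧ x i < 1) (lam : ℝ) (_ : 1 ≤ lam ∧ lam ≤ 2),
    ∑' k : ℕ, (2 : ℝ≥0∞)⁻¹ ^ k *
      ∑' w : Fin d → ℤ,
        ENNReal.ofReal (nrm2 (μ (dyadicCube k lam w x) - ν (dyadicCube k lam w x)))

/-- the restriction `ν 𝟙_A` of an `ℝ^d`-valued set function to `A` -/
def restr {d : ℕ} (ν : Set (Rd d) → Rd d) (A : Set (Rd d)) : Set (Rd d) → Rd d :=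
  fun S => ν (S ∩ A)

/-- the half-open unit cube `𝔠 = [-1/2, 1/2)^d` -/
def unitCube (d : ℕ) : Set (Rd d) := {y | ∀ i, -(1 / 2 : ℝ) ≤ y i ∧ y i < 1 / 2}

/-- The `ℝ^d`-valued measure `σ ℒ^d` with density `σ` w.r.t. Lebesgue measure,
as a set function. -/
noncomputable def densMeas {d : ℕ} (σ : Rd d → Rd d) : Set (Rd d) → Rd d :=
  fun A => ∫ y in A, σ y

/-- the sequence `n ↦ n^{-d} log P(∃ f_n ∈ S_n(𝔠) : 𝔡(μ_n(f_n)𝟙_𝔠, w 𝟙_𝔠 ℒ^d) ≤ ε)`,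
with values in `[-∞, ∞]` -/
noncomputable def cubeSeq (d : ℕ) {Ω' : Type*} [MeasurableSpace Ω'] (P : Measure Ω')
    (t : Edge d → Ω' → ℝ) (w : Rd d) (ε : ℝ) (n : ℕ) : EReal :=
  ((((n : ℝ) ^ d)⁻¹ : ℝ) : EReal) *
    ENNReal.log (P {ω | ∃ F : Streamm d, memSnSet n (fun e => t e ω) (unitCube d) F ∧
      ddist (restr (streamMeas n F) (unitCube d))
        (densMeas (Set.indicator (unitCube d) fun _ => w)) ≤ ENNReal.ofReal ε})

/-- The elementary rate function `I(w) ∈ [0,∞]`: the monotone limit, as `ε → 0`, of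
`- limsup_n n^{-d} log P(∃ f_n ∈ S_n(𝔠) : 𝔡(μ_n(f_n)𝟙_𝔠, w 𝟙_𝔠 ℒ^d) ≤ ε)`. -/
noncomputable def Ielem (d : ℕ) {Ω' : Type*} [MeasurableSpace Ω'] (P : Measure Ω')
    (t : Edge d → Ω' → ℝ) (w : Rd d) : EReal :=
  ⨆ (ε : ℝ) (_ : 0 < ε), -Filter.limsup (cubeSeq d P t w ε) Filter.atTop


/-- the homothety `π_{x,α} : y ↦ α y + x` -/
def homoth {d : ℕ} (x : Rd d) (α : ℝ) : Rd d → Rd d := fun y => α • y + x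

/-!
Write `δ = n₀/n` and `x = w/n`. The homothety `π_{x,δ}` sends `z/n₀` to `(z + w)/n`, so a stream
`f` at scale `n` pulls back along the edge translation `e ↦ e + w` to a stream `f₀` at scale `n₀`,
admissible in `𝔠` for the translated capacities; since `π_{x,δ}` multiplies Lebesgue measure
by `δ^d` and the mass of each edge changes from `n^{-d}` to `n₀^{-d}`, both measures tested
against a set `A` equal `δ^{-d}` times the original ones tested against `π_{x,δ}(A)`.
The image of a dyadic cube of `Δ_λ^k` is a cube of `Δ_{λ'}^{k+m}` with `λ' = 2^m δ λ ∈ [1,2]`,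
so `𝔡(μ_{n₀}(f₀), ·) ≤ δ^{-d} 2^m 𝔡(μ_n(f), ·) ≤ 2 δ^{-(d+1)} 𝔡(μ_n(f), ·)`.

The event at scale `n₀` is `X ∈ M` for `X` the capacities of the edges of `𝔠` and a closed set
`M`: a tiny dyadic cube around the center of a single edge bounds its intensity, so the streams
within `𝔡`-distance `ε` of a fixed measure form a compact set. The translated capacities have the
same i.i.d. joint law as `X`, so the event built from them has the same probability.
-/

section Norm
variable {d : ℕ}

lemma nrm2_smul (c : ℝ) (v : Rd d) : nrm2 (c • v) = |c| * nrm2 v := by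
  unfold nrm2
  rw [← Real.sqrt_sq_eq_abs, ← Real.sqrt_mul (sq_nonneg c), Finset.mul_sum]
  simp only [Pi.smul_apply, smul_eq_mul, mul_pow]

lemma abs_le_nrm2 (v : Rd d) (i : Fin d) : |v i| ≤ nrm2 v := by
  rw [← Real.sqrt_sq_eq_abs]
  exact Real.sqrt_le_sqrt
    (Finset.single_le_sum (f := fun j => v j ^ 2) (fun j _ => sq_nonneg _) (Finset.mem_univ i))

lemma continuous_nrm2 : Continuous (nrm2 (d := d)) := by
  unfold nrm2
  fun_prop

end Norm

section Homothety
variable {d : ℕ} {b : Rd d} {δ : ℝ}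

lemma homoth_apply (b : Rd d) (δ : ℝ) (y : Rd d) (i : Fin d) :
    homoth b δ y i = δ * y i + b i := rfl

lemma homoth_injective (hδ : δ ≠ 0) : Function.Injective (homoth b δ) := fun _ _ h =>
  smul_right_injective _ hδ (add_right_cancel h)

lemma homoth_image_eq_preimage (hδ : δ ≠ 0) (S : Set (Rd d)) :
    homoth b δ '' S = homoth (-(δ⁻¹ • b)) δ⁻¹ ⁻¹' S := by
  refine congrFun (Set.image_eq_preimage_of_inverse (fun y => ?_) (fun y => ?_)) S <;>
    funext i <;> simp only [homoth_apply, Pi.neg_apply, Pi.smul_apply, smul_eq_mul] <;>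
    field_simp <;> ring

lemma hasFDerivAt_homoth (b : Rd d) (δ : ℝ) (y : Rd d) :
    HasFDerivAt (homoth b δ) (δ • ContinuousLinearMap.id ℝ (Rd d)) y :=
  ((hasFDerivAt_id y).const_smul δ).add_const b

lemma setIntegral_image_homoth {E : Type*} [NormedAddCommGroup E] [NormedSpace ℝ E]
    (hδ : δ ≠ 0) {S : Set (Rd d)} (hS : MeasurableSet S) (g : Rd d → E) :
    ∫ y in homoth b δ '' S, g y = |δ| ^ d • ∫ y in S, g (homoth b δ y) := by
  rw [integral_image_eq_integral_abs_det_fderiv_smul volume hS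
    (fun y _ => (hasFDerivAt_homoth b δ y).hasFDerivWithinAt) (homoth_injective hδ).injOn,
    integral_smul]
  congr 1
  rw [ContinuousLinearMap.det, ContinuousLinearMap.toLinearMap_smul, ContinuousLinearMap.coe_id,
    LinearMap.det_smul, LinearMap.det_id, Module.finrank_fin_fun, mul_one, abs_pow]

end Homothety

section Lattice
variable {d : ℕ} {n n₀ : ℕ}

def edgeShift (w : Fin d → ℤ) : Edge d ≃ Edge d :=
  (Equiv.addRight w).prodCongr (Equiv.refl (Fin d))

@[simp] lemma edgeShift_apply (w : Fin d → ℤ) (e : Edge d) :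
    edgeShift w e = (e.1 + w, e.2) := rfl

lemma shift_add (z w : Fin d → ℤ) (i : Fin d) : shift (z + w) i = shift z i + w := by
  funext j; simp only [shift, Pi.add_apply]; ring

lemma unshift_add (z w : Fin d → ℤ) (i : Fin d) : unshift (z + w) i = unshift z i + w := by
  funext j; simp only [unshift, Pi.add_apply]; ring

lemma nodeLaw_comp_edgeShift (F : Streamm d) (w z : Fin d → ℤ) :
    nodeLaw (F ∘ edgeShift w) z ↔ nodeLaw F (z + w) := by
  simp only [nodeLaw, Function.comp_apply, edgeShift_apply, unshift_add]

lemma homoth_pt (hn₀ : n₀ ≠ 0) (w z : Fin d → ℤ) :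
    homoth (pt n w) ((n₀ : ℝ) / n) (pt n₀ z) = pt n (z + w) := by
  funext i
  simp only [homoth_apply, pt, Pi.add_apply, Int.cast_add]
  field_simp

lemma homoth_center (hn₀ : n₀ ≠ 0) (w : Fin d → ℤ) (e : Edge d) :
    homoth (pt n w) ((n₀ : ℝ) / n) (center n₀ e) = center n (edgeShift w e) := by
  funext i
  simp only [homoth_apply, center, pt, edgeShift_apply, Pi.add_apply, Int.cast_add]
  split_ifs <;> simp_all <;> ring

lemma bijOn_homoth_lattice (hn₀ : n₀ ≠ 0) (hn : n ≠ 0) (w : Fin d → ℤ) :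
    Set.BijOn (homoth (pt n w) ((n₀ : ℝ) / n))
      {p : Rd d | ∃ z : Fin d → ℤ, p = pt n₀ z} {p : Rd d | ∃ z : Fin d → ℤ, p = pt n z} := by
  refine ⟨?_, (homoth_injective (by positivity)).injOn, ?_⟩
  · rintro _ ⟨z, rfl⟩
    exact ⟨z + w, homoth_pt hn₀ w z⟩
  · rintro _ ⟨z, rfl⟩
    exact ⟨pt n₀ (z - w), ⟨z - w, rfl⟩, by rw [homoth_pt hn₀, sub_add_cancel]⟩

lemma bijOn_homoth_edges (hn₀ : n₀ ≠ 0) (hn : n ≠ 0) (w : Fin d → ℤ) :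
    Set.BijOn
      (Prod.map (homoth (pt n w) ((n₀ : ℝ) / n)) (homoth (pt n w) ((n₀ : ℝ) / n)))
      {q : Rd d × Rd d | ∃ (z : Fin d → ℤ) (i : Fin d), q = (pt n₀ z, pt n₀ (shift z i))}
      {q : Rd d × Rd d | ∃ (z : Fin d → ℤ) (i : Fin d), q = (pt n z, pt n (shift z i))} := by
  have hinj := homoth_injective (b := pt n w) (δ := (n₀ : ℝ) / n) (by positivity)
  refine ⟨?_, (hinj.prodMap hinj).injOn, ?_⟩
  · rintro _ ⟨z, i, rfl⟩
    exact ⟨z + w, i, by simp only [Prod.map, homoth_pt hn₀, shift_add]⟩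
  · rintro _ ⟨z, i, rfl⟩
    refine ⟨_, ⟨z - w, i, rfl⟩, ?_⟩
    simp only [Prod.map, homoth_pt hn₀, ← shift_add, sub_add_cancel]

end Lattice

section DyadicCube
variable {d : ℕ}

lemma dyadicCube_eq_pi (k : ℕ) (lam : ℝ) (W : Fin d → ℤ) (x : Rd d) :
    dyadicCube k lam W x = Set.univ.pi fun i =>
      Set.Ico (lam * (2 : ℝ)⁻¹ ^ k * ((W i : ℝ) - 1 / 2) + x i)
        (lam * (2 : ℝ)⁻¹ ^ k * ((W i : ℝ) + 1 / 2) + x i) := by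
  ext y
  simp [dyadicCube, Set.mem_pi, Set.mem_Ico]

lemma measurableSet_dyadicCube (k : ℕ) (lam : ℝ) (W : Fin d → ℤ) (x : Rd d) :
    MeasurableSet (dyadicCube k lam W x) := by
  rw [dyadicCube_eq_pi]
  exact .univ_pi fun _ => measurableSet_Ico

lemma image_homoth_dyadicCube {b : Rd d} {δ lam lam' : ℝ} (hδ : 0 < δ) {m : ℕ}
    (hlam' : lam' * (2 : ℝ)⁻¹ ^ m = δ * lam) (k : ℕ) (W : Fin d → ℤ) (x : Rd d) :
    homoth b δ '' dyadicCube k lam W x = dyadicCube (k + m) lam' W (homoth b δ x) := by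
  have hside : ∀ c : ℝ, lam' * (2 : ℝ)⁻¹ ^ (k + m) * c = δ * (lam * (2 : ℝ)⁻¹ ^ k * c) := by
    intro c
    rw [pow_add]
    linear_combination (c * (2 : ℝ)⁻¹ ^ k) * hlam'
  ext u
  simp only [homoth_image_eq_preimage hδ.ne', dyadicCube, Set.mem_preimage, Set.mem_ofPred_eq,
    homoth_apply, hside, Pi.neg_apply, Pi.smul_apply, smul_eq_mul]
  refine forall_congr' fun i => ?_
  rw [show δ⁻¹ * u i + -(δ⁻¹ * b i) = δ⁻¹ * (u i - b i) by ring, le_inv_mul_iff₀ hδ,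
    inv_mul_lt_iff₀ hδ]
  constructor <;> rintro ⟨h1, h2⟩ <;> constructor <;> linarith

lemma dyadicCube_eq_add_smul (K : ℕ) (lam : ℝ) (W v : Fin d → ℤ) (x : Rd d) :
    dyadicCube K lam W x =
      dyadicCube K lam (W + (2 ^ K : ℤ) • v) (fun i => x i - lam * v i) := by
  have h2K : (2 : ℝ)⁻¹ ^ K * 2 ^ K = 1 := by rw [← mul_pow]; norm_num
  have hside : ∀ (i : Fin d) (c : ℝ),
      lam * (2 : ℝ)⁻¹ ^ K * ((((W + (2 ^ K : ℤ) • v) i : ℤ) : ℝ) + c) + (x i - lam * v i) =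
        lam * (2 : ℝ)⁻¹ ^ K * ((W i : ℝ) + c) + x i := by
    intro i c
    push_cast [Pi.add_apply, Pi.smul_apply, smul_eq_mul]
    linear_combination (lam * (v i : ℝ)) * h2K
  ext y
  refine forall_congr' fun i => ?_
  simp only [sub_eq_add_neg ((_ : ℤ) : ℝ), hside]

lemma exists_offset_dyadicCube_eq {lam : ℝ} (hlam : 1 ≤ lam ∧ lam ≤ 2) (x : Rd d) :
    ∃ (v : Fin d → ℤ) (x' : Rd d), (∀ i, -1 ≤ x' i ∧ x' i < 1) ∧
      ∀ K W, dyadicCube K lam W x = dyadicCube K lam (W + (2 ^ K : ℤ) • v) x' := by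
  refine ⟨fun i => ⌊x i / lam + 1 / 2⌋, _, fun i => ?_,
    fun K W => dyadicCube_eq_add_smul K lam W _ x⟩
  have hlam0 : 0 < lam := by linarith
  have hfl := Int.floor_le (x i / lam + 1 / 2)
  have hfl' := Int.lt_floor_add_one (x i / lam + 1 / 2)
  have e1 := mul_le_mul_of_nonneg_left hfl hlam0.le
  have e2 := mul_lt_mul_of_pos_left hfl' hlam0
  have hx : lam * (x i / lam + 1 / 2) = x i + lam / 2 := by field_simp
  rw [hx] at e1 e2
  constructor <;> nlinarith

lemma exists_pow_two_mul_mem_Icc {a : ℝ} (ha : 0 < a) (ha2 : a ≤ 2) :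
    ∃ m : ℕ, 1 ≤ 2 ^ m * a ∧ 2 ^ m * a ≤ 2 := by
  classical
  have hex : ∃ m : ℕ, 1 ≤ 2 ^ m * a := by
    obtain ⟨m, hm⟩ := pow_unbounded_of_one_lt a⁻¹ (by norm_num : (1 : ℝ) < 2)
    exact ⟨m, by rw [inv_lt_iff_one_lt_mul₀ ha] at hm; exact hm.le⟩
  refine ⟨Nat.find hex, Nat.find_spec hex, ?_⟩
  rcases Nat.eq_zero_or_pos (Nat.find hex) with h0 | hpos
  · simpa [h0] using ha2
  · obtain ⟨j, hj⟩ := Nat.exists_eq_add_one.mpr hpos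
    have hprev := Nat.find_min hex (show j < Nat.find hex by omega)
    rw [not_le] at hprev
    rw [hj, pow_succ]
    linarith

lemma exists_image_homoth_dyadicCube {b : Rd d} {δ lam : ℝ} (hδ : 0 < δ) (hδ1 : δ ≤ 1)
    (hlam : 1 ≤ lam ∧ lam ≤ 2) (x : Rd d) :
    ∃ (m : ℕ) (lam' : ℝ) (x' : Rd d) (v : Fin d → ℤ),
      (1 ≤ lam' ∧ lam' ≤ 2) ∧ (∀ i, -1 ≤ x' i ∧ x' i < 1) ∧ 2 ^ m * δ ≤ 2 ∧
      ∀ k W, homoth b δ '' dyadicCube k lam W x =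
        dyadicCube (k + m) lam' (W + (2 ^ (k + m) : ℤ) • v) x' := by
  obtain ⟨m, hm1, hm2⟩ := exists_pow_two_mul_mem_Icc (a := δ * lam) (by nlinarith) (by nlinarith)
  have hlam' : 2 ^ m * (δ * lam) * (2 : ℝ)⁻¹ ^ m = δ * lam := by
    rw [mul_comm, ← mul_assoc, ← mul_pow]; norm_num
  obtain ⟨v, x', hx', hcube⟩ := exists_offset_dyadicCube_eq ⟨hm1, hm2⟩ (homoth b δ x)
  refine ⟨m, _, x', v, ⟨hm1, hm2⟩, hx', by nlinarith [pow_pos (two_pos : (0 : ℝ) < 2) m],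
    fun k W => ?_⟩
  rw [image_homoth_dyadicCube hδ hlam', hcube]

end DyadicCube

section Transport
variable {d : ℕ} {n n₀ : ℕ}

lemma streamMeas_comp_edgeShift (hn₀ : n₀ ≠ 0) (hn : n ≠ 0) (w : Fin d → ℤ) (F : Streamm d)
    (A : Set (Rd d)) :
    streamMeas n₀ (F ∘ edgeShift w) A =
      (((n₀ : ℝ) / n) ^ d)⁻¹ • streamMeas n F (homoth (pt n w) ((n₀ : ℝ) / n) '' A) := by
  unfold streamMeas
  rw [← (edgeShift w).tsum_eq (fun e => Set.indicator _ _ (center n e)), ← tsum_const_smul'']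
  refine tsum_congr fun e => ?_
  rw [← homoth_center hn₀ w e, Set.indicator_image (homoth_injective (by positivity)),
    ← Set.indicator_const_smul_apply]
  congr 1
  funext _
  simp only [Function.comp_apply, streamVec, edgeShift_apply, smul_smul]
  congr 1
  have : (n : ℝ) ≠ 0 := by exact_mod_cast hn
  rw [div_pow]
  field_simp

lemma densMeas_indicator_image_homoth {b : Rd d} {δ : ℝ} (hδ : δ ≠ 0) (σ : Rd d → Rd d)
    (C : Set (Rd d)) {Q : Set (Rd d)} (hQ : MeasurableSet Q) :
    densMeas ((homoth b δ '' C).indicator σ) (homoth b δ '' Q) =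
      |δ| ^ d • densMeas (C.indicator (σ ∘ homoth b δ)) Q := by
  unfold densMeas
  rw [setIntegral_image_homoth hδ hQ]
  simp only [Set.indicator_image (homoth_injective hδ)]

end Transport

section Ddist
variable {d : ℕ}

noncomputable def ddistAt (ν μ : Set (Rd d) → Rd d) (x : Rd d) (lam : ℝ) : ℝ≥0∞ :=
  ∑' k : ℕ, (2 : ℝ≥0∞)⁻¹ ^ k *
    ∑' W : Fin d → ℤ, ENNReal.ofReal (nrm2 (μ (dyadicCube k lam W x) - ν (dyadicCube k lam W x)))

lemma ddistAt_le_ddist (ν μ : Set (Rd d) → Rd d) {x : Rd d} (hx : ∀ i, -1 ≤ x i ∧ x i < 1)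
    {lam : ℝ} (hlam : 1 ≤ lam ∧ lam ≤ 2) : ddistAt ν μ x lam ≤ ddist ν μ :=
  le_iSup₂_of_le x hx (le_iSup₂_of_le lam hlam le_rfl)

lemma ddist_le_iff {ν μ : Set (Rd d) → Rd d} {c : ℝ≥0∞} :
    ddist ν μ ≤ c ↔ ∀ x, (∀ i, -1 ≤ x i ∧ x i < 1) → ∀ lam, 1 ≤ lam ∧ lam ≤ 2 →
      ddistAt ν μ x lam ≤ c := by
  simp only [ddist, iSup_le_iff, ddistAt]

lemma le_ddistAt (ν μ : Set (Rd d) → Rd d) (x : Rd d) (lam : ℝ) (k : ℕ) (W : Fin d → ℤ) :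
    (2 : ℝ≥0∞)⁻¹ ^ k * ENNReal.ofReal
      (nrm2 (μ (dyadicCube k lam W x) - ν (dyadicCube k lam W x))) ≤ ddistAt ν μ x lam := by
  refine le_trans ?_ (ENNReal.le_tsum k)
  gcongr
  exact ENNReal.le_tsum W

lemma tsum_inv_two_pow_mul_add_le (a : ℕ → ℝ≥0∞) (m : ℕ) :
    ∑' k, (2 : ℝ≥0∞)⁻¹ ^ k * a (k + m) ≤ 2 ^ m * ∑' k, (2 : ℝ≥0∞)⁻¹ ^ k * a k := by
  have h2m : ∀ k, (2 : ℝ≥0∞)⁻¹ ^ k = 2 ^ m * (2 : ℝ≥0∞)⁻¹ ^ (k + m) := fun k => by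
    rw [pow_add, mul_left_comm, ← mul_pow,
      ENNReal.mul_inv_cancel two_ne_zero ENNReal.ofNat_ne_top, one_pow, mul_one]
  calc ∑' k, (2 : ℝ≥0∞)⁻¹ ^ k * a (k + m)
      = 2 ^ m * ∑' k, (2 : ℝ≥0∞)⁻¹ ^ (k + m) * a (k + m) := by
        rw [← ENNReal.tsum_mul_left]
        exact tsum_congr fun k => by rw [h2m k, mul_assoc]
    _ ≤ 2 ^ m * ∑' k, (2 : ℝ≥0∞)⁻¹ ^ k * a k :=
        mul_le_mul_right (ENNReal.tsum_comp_le_tsum_of_injective (add_left_injective m)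
          (fun k => (2 : ℝ≥0∞)⁻¹ ^ k * a k)) _

lemma ddist_le_of_homoth {ν μ ν' μ' : Set (Rd d) → Rd d} {b : Rd d} {δ c : ℝ}
    (hδ : 0 < δ) (hδ1 : δ ≤ 1) (hc : 0 ≤ c)
    (hν : ∀ k lam W x, ν' (dyadicCube k lam W x) = c • ν (homoth b δ '' dyadicCube k lam W x))
    (hμ : ∀ k lam W x, μ' (dyadicCube k lam W x) = c • μ (homoth b δ '' dyadicCube k lam W x)) :
    ddist ν' μ' ≤ ENNReal.ofReal (2 * c / δ) * ddist ν μ := by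
  refine ddist_le_iff.mpr fun x _ lam hlam => ?_
  obtain ⟨m, lam', x', v, hlam', hx', h2m, himage⟩ :=
    exists_image_homoth_dyadicCube (b := b) hδ hδ1 hlam x
  set a : ℕ → ℝ≥0∞ := fun K => ∑' W : Fin d → ℤ,
    ENNReal.ofReal (nrm2 (μ (dyadicCube K lam' W x') - ν (dyadicCube K lam' W x')))
  have hlevel : ∀ k, ∑' W : Fin d → ℤ, ENNReal.ofReal
      (nrm2 (μ' (dyadicCube k lam W x) - ν' (dyadicCube k lam W x))) =
      ENNReal.ofReal c * a (k + m) := by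
    intro k
    simp_rw [hν, hμ, himage, ← smul_sub, nrm2_smul, abs_of_nonneg hc, ENNReal.ofReal_mul hc,
      ENNReal.tsum_mul_left]
    congr 1
    exact (Equiv.addRight _).tsum_eq
      (fun W => ENNReal.ofReal (nrm2 (μ (dyadicCube (k + m) lam' W x') -
        ν (dyadicCube (k + m) lam' W x'))))
  have hscale : ENNReal.ofReal c * 2 ^ m ≤ ENNReal.ofReal (2 * c / δ) := by
    rw [← ENNReal.ofReal_ofNat 2, ← ENNReal.ofReal_pow zero_le_two, ← ENNReal.ofReal_mul hc]
    refine ENNReal.ofReal_le_ofReal ?_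
    rw [le_div_iff₀ hδ]
    nlinarith
  calc ddistAt ν' μ' x lam = ENNReal.ofReal c * ∑' k, (2 : ℝ≥0∞)⁻¹ ^ k * a (k + m) := by
        simp_rw [ddistAt, hlevel, mul_left_comm _ (ENNReal.ofReal c), ENNReal.tsum_mul_left]
    _ ≤ ENNReal.ofReal c * (2 ^ m * ddistAt ν μ x' lam') := by
        gcongr
        exact tsum_inv_two_pow_mul_add_le a m
    _ ≤ ENNReal.ofReal (2 * c / δ) * ddist ν μ := by
        rw [← mul_assoc]
        exact mul_le_mul' hscale (ddistAt_le_ddist ν μ hx' hlam')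

end Ddist

section Compactness
variable {d : ℕ} {n : ℕ}

lemma finite_setOf_forall_le_intCast_le (a b : Rd d) :
    {z : Fin d → ℤ | ∀ j, a j ≤ z j ∧ (z j : ℝ) ≤ b j}.Finite :=
  (Set.Finite.pi fun j => Set.finite_Icc ⌈a j⌉ ⌊b j⌋).subset fun _ hz j _ =>
    ⟨Int.ceil_le.mpr (hz j).1, Int.le_floor.mpr (hz j).2⟩

lemma finite_setOf_center_mem_Icc (hn : n ≠ 0) (a b : Rd d) :
    {e : Edge d | center n e ∈ Set.Icc a b}.Finite := by
  refine ((finite_setOf_forall_le_intCast_le (fun j => n * a j - 1) (fun j => n * b j)).prod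
    Set.finite_univ).subset fun e he => ⟨fun j => ?_, trivial⟩
  have hn' : (0 : ℝ) < n := by positivity
  have h1 := he.1 j
  have h2 := he.2 j
  simp only [center, le_div_iff₀ hn', div_le_iff₀ hn'] at h1 h2
  have : (0 : ℝ) ≤ (if j = e.2 then 1 / 2 else 0) ∧ (if j = e.2 then 1 / 2 else 0 : ℝ) ≤ 1 := by
    split_ifs <;> norm_num
  constructor <;> nlinarith

lemma finite_setOf_pt_mem_unitCube (hn : n ≠ 0) :
    {e : Edge d | pt n e.1 ∈ unitCube d}.Finite := by
  refine ((finite_setOf_forall_le_intCast_le (fun _ => -(n : ℝ)) (fun _ => n)).prod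
    Set.finite_univ).subset fun e he => ⟨fun j => ?_, trivial⟩
  have hn' : (0 : ℝ) < n := by positivity
  have h := he j
  simp only [pt, le_div_iff₀ hn', div_lt_iff₀ hn'] at h
  constructor <;> nlinarith

lemma finite_setOf_center_mem_dyadicCube (hn : n ≠ 0) (k : ℕ) (lam : ℝ) (W : Fin d → ℤ)
    (x : Rd d) : {e : Edge d | center n e ∈ dyadicCube k lam W x}.Finite := by
  refine (finite_setOf_center_mem_Icc hn (fun i => lam * (2 : ℝ)⁻¹ ^ k * ((W i : ℝ) - 1 / 2) + x i)
    (fun i => lam * (2 : ℝ)⁻¹ ^ k * ((W i : ℝ) + 1 / 2) + x i)).subset fun e he => ?_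
  rw [dyadicCube_eq_pi] at he
  rw [Set.mem_ofPred_eq, ← Set.pi_univ_Icc]
  exact Set.pi_mono (fun _ _ => Set.Ico_subset_Icc_self) he

lemma continuous_streamMeas_dyadicCube (hn : n ≠ 0) (k : ℕ) (lam : ℝ) (W : Fin d → ℤ)
    (x : Rd d) : Continuous fun F : Streamm d => streamMeas n F (dyadicCube k lam W x) := by
  have hfin := finite_setOf_center_mem_dyadicCube hn k lam W x
  have hsum : ∀ F : Streamm d, streamMeas n F (dyadicCube k lam W x) =
      ∑ e ∈ hfin.toFinset, ((n : ℝ) ^ d)⁻¹ • streamVec F e := fun F => by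
    rw [streamMeas, tsum_eq_sum (s := hfin.toFinset) fun e he => Set.indicator_of_notMem
      (by simpa using he) _]
    exact Finset.sum_congr rfl fun e he => Set.indicator_of_mem (by simpa using he) _
  simp_rw [hsum, streamVec]
  fun_prop

lemma lowerSemicontinuous_ddist_streamMeas (hn : n ≠ 0) (μ : Set (Rd d) → Rd d) :
    LowerSemicontinuous fun F : Streamm d => ddist (streamMeas n F) μ := by
  refine lowerSemicontinuous_iSup fun x => lowerSemicontinuous_iSup fun _ =>
    lowerSemicontinuous_iSup fun lam => lowerSemicontinuous_iSup fun _ => ?_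
  simp_rw [← ENNReal.tsum_mul_left]
  refine lowerSemicontinuous_tsum fun k => lowerSemicontinuous_tsum fun W =>
    Continuous.lowerSemicontinuous ?_
  refine (ENNReal.continuous_const_mul (by simp)).comp (ENNReal.continuous_ofReal.comp ?_)
  exact continuous_nrm2.comp (continuous_const.sub (continuous_streamMeas_dyadicCube hn k lam W x))

lemma center_apply_eq_intCast_div (n : ℕ) (e : Edge d) (j : Fin d) :
    center n e j = ((2 * e.1 j + if j = e.2 then 1 else 0 : ℤ) : ℝ) / (2 * n) := by
  rw [center]
  split_ifs <;> push_cast <;> ring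

lemma eq_of_forall_abs_center_sub_lt (hn : n ≠ 0) {e e' : Edge d}
    (h : ∀ j, |center n e j - center n e' j| < 1 / (2 * n)) : e = e' := by
  have hn' : (0 : ℝ) < 2 * n := by positivity
  have hcode : ∀ j, (2 * e.1 j + if j = e.2 then 1 else 0 : ℤ) =
      2 * e'.1 j + if j = e'.2 then 1 else 0 := fun j => by
    have hj := h j
    rw [center_apply_eq_intCast_div, center_apply_eq_intCast_div, ← sub_div, abs_div,
      abs_of_pos hn', div_lt_div_iff_of_pos_right hn', ← Int.cast_sub, ← Int.cast_abs] at hj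
    have := abs_lt.mp (show |_| < (1 : ℤ) by exact_mod_cast hj)
    split_ifs at this ⊢ <;> omega
  have hdir : e.2 = e'.2 := by
    by_contra hne
    have := hcode e.2
    rw [if_pos rfl, if_neg hne] at this
    omega
  refine Prod.ext (funext fun j => ?_) hdir
  have := hcode j
  rw [hdir] at this
  split_ifs at this <;> omega

/-- `dyadicCube n 1 0 c` is the cube of side `2^{-n} < 1/n` centred at `c`; centred at `c(e)`,
it contains no other center of `𝔼_n^d`. -/
lemma streamMeas_dyadicCube_center (hn : n ≠ 0) (F : Streamm d) (e : Edge d) :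
    streamMeas n F (dyadicCube n 1 0 (center n e)) = ((n : ℝ) ^ d)⁻¹ • streamVec F e := by
  have hside : (2 : ℝ)⁻¹ ^ n * (1 / 2) < 1 / (2 * n) := by
    have h2n : (n : ℝ) < 2 ^ n := by exact_mod_cast Nat.lt_two_pow_self
    rw [inv_pow, show ((2 : ℝ) ^ n)⁻¹ * (1 / 2) = 1 / (2 * 2 ^ n) by ring]
    exact one_div_lt_one_div_of_lt (by positivity) (by linarith)
  have hmem : ∀ e', center n e' ∈ dyadicCube n 1 0 (center n e) ↔ e' = e := fun e' => by
    refine ⟨fun he' => eq_of_forall_abs_center_sub_lt hn fun j => ?_, ?_⟩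
    · obtain ⟨h1, h2⟩ := he' j
      simp only [Pi.zero_apply, Int.cast_zero, one_mul] at h1 h2
      rw [abs_lt]
      constructor <;> linarith
    · rintro rfl j
      simp only [Pi.zero_apply, Int.cast_zero, one_mul]
      constructor <;> nlinarith [pow_pos (inv_pos.mpr (two_pos : (0 : ℝ) < 2)) n]
  rw [streamMeas, tsum_eq_single e fun e' he' => Set.indicator_of_notMem
    (mt (hmem e').mp he') _, Set.indicator_of_mem ((hmem e).mpr rfl)]

lemma abs_le_of_ddist_streamMeas_le (hn : n ≠ 0) {F : Streamm d} {μ : Set (Rd d) → Rd d}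
    {c : ℝ≥0∞} (hc : c ≠ ⊤) (h : ddist (streamMeas n F) μ ≤ c) (e : Edge d) :
    |F e| ≤ (n : ℝ) ^ d * ((2 ^ n * c).toReal + |μ (dyadicCube n 1 0 (center n e)) e.2|) := by
  set Q := dyadicCube n 1 0 (center n e)
  obtain ⟨v, x', hx', hcube⟩ := exists_offset_dyadicCube_eq ⟨le_rfl, one_le_two⟩ (center n e)
  have hterm : (2 : ℝ≥0∞)⁻¹ ^ n * ENNReal.ofReal (nrm2 (μ Q - streamMeas n F Q)) ≤ c := by
    simp only [Q, hcube]
    exact (le_ddistAt _ _ _ _ _ _).trans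
      ((ddistAt_le_ddist _ _ hx' ⟨le_rfl, one_le_two⟩).trans h)
  have hnrm : nrm2 (μ Q - streamMeas n F Q) ≤ (2 ^ n * c).toReal := by
    refine (ENNReal.ofReal_le_iff_le_toReal (ENNReal.mul_ne_top (by simp) hc)).mp ?_
    calc ENNReal.ofReal (nrm2 (μ Q - streamMeas n F Q))
        = 2 ^ n * ((2 : ℝ≥0∞)⁻¹ ^ n * ENNReal.ofReal (nrm2 (μ Q - streamMeas n F Q))) := by
          rw [← mul_assoc, ← mul_pow, ENNReal.mul_inv_cancel two_ne_zero ENNReal.ofNat_ne_top,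
            one_pow, one_mul]
      _ ≤ 2 ^ n * c := by gcongr
  have hcomp : streamMeas n F Q e.2 = ((n : ℝ) ^ d)⁻¹ * F e := by
    simp [Q, streamMeas_dyadicCube_center hn, streamVec, bvec]
  have hnd : (0 : ℝ) < (n : ℝ) ^ d := by positivity
  have hdiff := (abs_le_nrm2 (μ Q - streamMeas n F Q) e.2).trans hnrm
  rw [Pi.sub_apply, hcomp] at hdiff
  calc |F e| = (n : ℝ) ^ d * |((n : ℝ) ^ d)⁻¹ * F e| := by
        rw [abs_mul, abs_inv, abs_of_pos hnd, mul_inv_cancel_left₀ hnd.ne']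
    _ ≤ (n : ℝ) ^ d * ((2 ^ n * c).toReal + |μ Q e.2|) := by
        gcongr
        linarith [abs_sub_abs_le_abs_sub (((n : ℝ) ^ d)⁻¹ * F e) (μ Q e.2),
          abs_sub_comm (((n : ℝ) ^ d)⁻¹ * F e) (μ Q e.2)]

lemma isCompact_setOf_ddist_streamMeas_le (hn : n ≠ 0) (μ : Set (Rd d) → Rd d) {c : ℝ≥0∞}
    (hc : c ≠ ⊤) : IsCompact {F : Streamm d | ddist (streamMeas n F) μ ≤ c} :=
  (isCompact_univ_pi fun _ => isCompact_Icc).of_isClosed_subset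
    ((lowerSemicontinuous_ddist_streamMeas hn μ).isClosed_preimage c)
    fun _ hF e _ => abs_le.mp (abs_le_of_ddist_streamMeas_le hn hc hF e)

end Compactness

lemma IsCompact.isClosed_setOf_exists_mem {X Y : Type*} [TopologicalSpace X] [TopologicalSpace Y]
    {K : Set X} (hK : IsCompact K) {R : Set (X × Y)} (hR : IsClosed R) :
    IsClosed {y | ∃ x ∈ K, (x, y) ∈ R} := by
  have := isCompact_iff_compactSpace.mp hK
  have himage : {y | ∃ x ∈ K, (x, y) ∈ R} =
      Prod.snd '' ((fun p : K × Y => ((p.1 : X), p.2)) ⁻¹' R) := by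
    ext y
    simp
  rw [himage]
  exact isClosedMap_snd_of_compactSpace _ (hR.preimage (by fun_prop))

section Capacities
variable {d : ℕ} {n : ℕ}

abbrev CubeEdge (d n : ℕ) := {e : Edge d // pt n e.1 ∈ unitCube d}

def admissibleCaps (n : ℕ) (μ : Set (Rd d) → Rd d) (c : ℝ≥0∞) : Set (CubeEdge d n → ℝ) :=
  {v | ∃ F : Streamm d, (∀ e : CubeEdge d n, |F e.1| ≤ v e) ∧
    (∀ z, pt n z ∈ unitCube d → (∀ i, pt n (unshift z i) ∈ unitCube d) → nodeLaw F z) ∧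
    ddist (streamMeas n F) μ ≤ c}

lemma exists_memSnSet_iff_mem_admissibleCaps (γ : Edge d → ℝ) (μ : Set (Rd d) → Rd d)
    (c : ℝ≥0∞) :
    (∃ F, memSnSet n γ (unitCube d) F ∧ ddist (streamMeas n F) μ ≤ c) ↔
      (fun e : CubeEdge d n => γ e.1) ∈ admissibleCaps n μ c := by
  simp only [memSnSet, admissibleCaps, Subtype.forall, Set.mem_ofPred_eq, and_assoc]

lemma isClosed_admissibleCaps (hn : n ≠ 0) (μ : Set (Rd d) → Rd d) {c : ℝ≥0∞} (hc : c ≠ ⊤) :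
    IsClosed (admissibleCaps n μ c) := by
  set R : Set (Streamm d × (CubeEdge d n → ℝ)) := {p | (∀ e : CubeEdge d n, |p.1 e.1| ≤ p.2 e) ∧
    ∀ z, pt n z ∈ unitCube d → (∀ i, pt n (unshift z i) ∈ unitCube d) → nodeLaw p.1 z}
  have hR : IsClosed R := by
    simp only [R, nodeLaw, Set.ofPred_and, Set.ofPred_forall]
    exact (isClosed_iInter fun e => isClosed_le (by fun_prop) (by fun_prop)).inter
      (isClosed_iInter fun z => isClosed_iInter fun _ => isClosed_iInter fun _ =>
        isClosed_eq (by fun_prop) continuous_const)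
  convert IsCompact.isClosed_setOf_exists_mem (isCompact_setOf_ddist_streamMeas_le hn μ hc) hR
    using 1
  ext v
  simp only [admissibleCaps, R, Set.mem_ofPred_eq]
  tauto

end Capacities

lemma measure_setOf_comp_mem_eq {Ω ι E : Type*} [MeasurableSpace Ω] {P : Measure Ω}
    [IsProbabilityMeasure P] [Fintype E] {t : ι → Ω → ℝ} (hmeas : ∀ i, Measurable (t i))
    {G : Measure ℝ} (hlaw : ∀ i, P.map (t i) = G) (hindep : ProbabilityTheory.iIndepFun t P)
    {f g : E → ι} (hf : Function.Injective f) (hg : Function.Injective g) {M : Set (E → ℝ)}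
    (hM : MeasurableSet M) :
    P {ω | (fun e => t (f e) ω) ∈ M} = P {ω | (fun e => t (g e) ω) ∈ M} := by
  have hjoint : ∀ f : E → ι, Function.Injective f →
      P.map (fun ω e => t (f e) ω) = Measure.pi fun _ => G := fun f hf => by
    rw [(ProbabilityTheory.iIndepFun_iff_map_fun_eq_pi_map
      fun e => (hmeas (f e)).aemeasurable).mp (hindep.precomp hf)]
    simp only [hlaw]
  have hmeasf : ∀ f : E → ι, Measurable fun ω e => t (f e) ω := fun f =>
    measurable_pi_lambda _ fun e => hmeas (f e)
  change P ((fun ω e => t (f e) ω) ⁻¹' M) = P ((fun ω e => t (g e) ω) ⁻¹' M)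
  rw [← Measure.map_apply (hmeasf f) hM, hjoint f hf, ← hjoint g hg,
    Measure.map_apply (hmeasf g) hM]

section Pullback
variable {d : ℕ} {n n₀ : ℕ}

lemma memSnSet_comp_edgeShift (hn₀ : n₀ ≠ 0) {w : Fin d → ℤ} {γ : Edge d → ℝ}
    {C : Set (Rd d)} {F : Streamm d}
    (h : memSnSet n γ (homoth (pt n w) ((n₀ : ℝ) / n) '' C) F) :
    memSnSet n₀ (γ ∘ edgeShift w) C (F ∘ edgeShift w) := by
  refine ⟨fun e he => h.1 _ ?_, fun z hz hz' => (nodeLaw_comp_edgeShift F w z).mpr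
    (h.2 _ ?_ fun i => ?_)⟩
  · rw [edgeShift_apply, ← homoth_pt hn₀]
    exact Set.mem_image_of_mem _ he
  · rw [← homoth_pt hn₀]
    exact Set.mem_image_of_mem _ hz
  · rw [unshift_add, ← homoth_pt hn₀]
    exact Set.mem_image_of_mem _ (hz' i)

lemma ddist_comp_edgeShift_le (hn₀ : n₀ ≠ 0) (hn : n₀ ≤ n) (w : Fin d → ℤ) (F : Streamm d)
    (σ : Rd d → Rd d) (C : Set (Rd d)) {ε : ℝ}
    (h : ddist (streamMeas n F) (densMeas ((homoth (pt n w) ((n₀ : ℝ) / n) '' C).indicator σ))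
      ≤ ENNReal.ofReal ((1 / 2) * ((n₀ : ℝ) / n) ^ (d + 1) * ε)) :
    ddist (streamMeas n₀ (F ∘ edgeShift w))
      (densMeas (C.indicator fun y => σ (homoth (pt n w) ((n₀ : ℝ) / n) y)))
      ≤ ENNReal.ofReal ε := by
  set δ : ℝ := (n₀ : ℝ) / n
  have hn' : n ≠ 0 := by omega
  have hδ : 0 < δ := by positivity
  have hδ1 : δ ≤ 1 := div_le_one_of_le₀ (by exact_mod_cast hn) (Nat.cast_nonneg n)
  have hdens : ∀ Q : Set (Rd d), MeasurableSet Q →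
      densMeas (C.indicator fun y => σ (homoth (pt n w) δ y)) Q =
        (δ ^ d)⁻¹ • densMeas ((homoth (pt n w) δ '' C).indicator σ) (homoth (pt n w) δ '' Q) :=
    fun Q hQ => by
      rw [densMeas_indicator_image_homoth hδ.ne' σ C hQ, abs_of_pos hδ, smul_smul,
        inv_mul_cancel₀ (by positivity), one_smul]
      rfl
  refine (ddist_le_of_homoth hδ hδ1 (by positivity)
    (fun k lam W x => streamMeas_comp_edgeShift hn₀ hn' w F _)
    (fun k lam W x => hdens _ (measurableSet_dyadicCube k lam W x))).trans ?_
  refine (mul_le_mul_right h _).trans_eq ?_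
  rw [← ENNReal.ofReal_mul (by positivity)]
  congr 1
  field_simp
  ring

end Pullback

theorem statement8_general
    (d : ℕ)
    (G : Measure ℝ)
    {Ω' : Type*} [MeasurableSpace Ω'] (P : Measure Ω') (hP : IsProbabilityMeasure P)
    (t : Edge d → Ω' → ℝ) (hmeas : ∀ e, Measurable (t e))
    (hlaw : ∀ e, P.map (t e) = G)
    (hindep : ProbabilityTheory.iIndepFun t P)
    (σ : Rd d → Rd d)
    (ε : ℝ) (n n₀ : ℕ) (hn₀ : 1 ≤ n₀) (hn : n₀ ≤ n)
    (w : Fin d → ℤ) :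
    Set.BijOn (homoth (pt n w) ((n₀ : ℝ) / n))
        {p : Rd d | ∃ z : Fin d → ℤ, p = pt n₀ z} {p : Rd d | ∃ z : Fin d → ℤ, p = pt n z}
    ∧ Set.BijOn
        (Prod.map (homoth (pt n w) ((n₀ : ℝ) / n)) (homoth (pt n w) ((n₀ : ℝ) / n)))
        {q : Rd d × Rd d | ∃ (z : Fin d → ℤ) (i : Fin d), q = (pt n₀ z, pt n₀ (shift z i))}
        {q : Rd d × Rd d | ∃ (z : Fin d → ℤ) (i : Fin d), q = (pt n z, pt n (shift z i))}
    ∧ P {ω | ∃ F : Streamm d,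
          memSnSet n (fun e => t e ω) (homoth (pt n w) ((n₀ : ℝ) / n) '' unitCube d) F ∧
          ddist (streamMeas n F)
            (densMeas (Set.indicator (homoth (pt n w) ((n₀ : ℝ) / n) '' unitCube d) σ))
            ≤ ENNReal.ofReal ((1 / 2) * ((n₀ : ℝ) / n) ^ (d + 1) * ε)}
      ≤ P {ω | ∃ F : Streamm d, memSnSet n₀ (fun e => t e ω) (unitCube d) F ∧
          ddist (streamMeas n₀ F)
            (densMeas (Set.indicator (unitCube d)
              fun y => σ (homoth (pt n w) ((n₀ : ℝ) / n) y)))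
            ≤ ENNReal.ofReal ε} := by
  have hn₀' : n₀ ≠ 0 := by omega
  have hn' : n ≠ 0 := by omega
  refine ⟨bijOn_homoth_lattice hn₀' hn' w, bijOn_homoth_edges hn₀' hn' w, ?_⟩
  have : Fintype (CubeEdge d n₀) := (finite_setOf_pt_mem_unitCube hn₀').fintype
  set M := admissibleCaps n₀
    (densMeas ((unitCube d).indicator fun y => σ (homoth (pt n w) ((n₀ : ℝ) / n) y)))
    (ENNReal.ofReal ε)
  calc _ ≤ P {ω | (fun e : CubeEdge d n₀ => t (edgeShift w e.1) ω) ∈ M} :=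
        measure_mono <| by
          rintro ω ⟨F, hF, hdd⟩
          exact (exists_memSnSet_iff_mem_admissibleCaps _ _ _).mp
            ⟨F ∘ edgeShift w, memSnSet_comp_edgeShift hn₀' hF,
              ddist_comp_edgeShift_le hn₀' hn w F σ _ hdd⟩
    _ = P {ω | (fun e : CubeEdge d n₀ => t e.1 ω) ∈ M} :=
        measure_setOf_comp_mem_eq hmeas hlaw hindep
          ((edgeShift w).injective.comp Subtype.val_injective) Subtype.val_injective
          (isClosed_admissibleCaps hn₀' _ ENNReal.ofReal_ne_top).measurableSet
    _ = _ := by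
        congr 1
        ext ω
        exact (exists_memSnSet_iff_mem_admissibleCaps (fun e => t e ω) _ _).symm

/-- Lemma 5.5, scaling and translation 2.
Fix `d ≥ 2` and i.i.d. capacities of compactly supported law `G` on `[0,∞)`.  Let
`σ ∈ L^∞(ℝ^d → ℝ^d)`, `ε > 0`, `n ≥ 1`, `x = w/n ∈ ℤ_n^d`, `1 ≤ n₀ ≤ n`, `δ = n₀/n`.
Then `π_{x,δ}` maps `ℤ_{n₀}^d` bijectively onto `ℤ_n^d` (hence induces a bijection from
`𝔼_{n₀}^d` onto `𝔼_n^d`), and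
`P(∃ f_n ∈ S_n(π_{x,δ}(𝔠)) : 𝔡(μ_n(f_n), σ𝟙_{π_{x,δ}(𝔠)}ℒ^d) ≤ (1/2)(n₀/n)^{d+1} ε)`
`≤ P(∃ f_{n₀} ∈ S_{n₀}(𝔠) : 𝔡(μ_{n₀}(f_{n₀}), (σ∘π_{x,δ})𝟙_𝔠 ℒ^d) ≤ ε)`. -/
theorem statement8
    (d : ℕ) (hd : 2 ≤ d)
    (G : Measure ℝ) (hGprob : IsProbabilityMeasure G)
    (hGnonneg : G (Set.Iio 0) = 0) (hGbdd : ∃ b : ℝ, G (Set.Ici b) = 0)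
    {Ω' : Type*} [MeasurableSpace Ω'] (P : Measure Ω') (hP : IsProbabilityMeasure P)
    (t : Edge d → Ω' → ℝ) (hmeas : ∀ e, Measurable (t e))
    (hlaw : ∀ e, P.map (t e) = G)
    (hindep : ProbabilityTheory.iIndepFun t P)
    (σ : Rd d → Rd d) (hσmeas : Measurable σ)
    (hσbd : ∃ C : ℝ, ∀ᵐ x ∂(volume : Measure (Rd d)), nrm2 (σ x) ≤ C)
    (ε : ℝ) (hε : 0 < ε) (n n₀ : ℕ) (hn₀ : 1 ≤ n₀) (hn : n₀ ≤ n)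
    (w : Fin d → ℤ) :
    Set.BijOn (homoth (pt n w) ((n₀ : ℝ) / n))
        {p : Rd d | ∃ z : Fin d → ℤ, p = pt n₀ z} {p : Rd d | ∃ z : Fin d → ℤ, p = pt n z}
    ∧ Set.BijOn
        (Prod.map (homoth (pt n w) ((n₀ : ℝ) / n)) (homoth (pt n w) ((n₀ : ℝ) / n)))
        {q : Rd d × Rd d | ∃ (z : Fin d → ℤ) (i : Fin d), q = (pt n₀ z, pt n₀ (shift z i))}
        {q : Rd d × Rd d | ∃ (z : Fin d → ℤ) (i : Fin d), q = (pt n z, pt n (shift z i))}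
    ∧ P {ω | ∃ F : Streamm d,
          memSnSet n (fun e => t e ω) (homoth (pt n w) ((n₀ : ℝ) / n) '' unitCube d) F ∧
          ddist (streamMeas n F)
            (densMeas (Set.indicator (homoth (pt n w) ((n₀ : ℝ) / n) '' unitCube d) σ))
            ≤ ENNReal.ofReal ((1 / 2) * ((n₀ : ℝ) / n) ^ (d + 1) * ε)}
      ≤ P {ω | ∃ F : Streamm d, memSnSet n₀ (fun e => t e ω) (unitCube d) F ∧
          ddist (streamMeas n₀ F)
            (densMeas (Set.indicator (unitCube d)
              fun y => σ (homoth (pt n w) ((n₀ : ℝ) / n) y)))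
            ≤ ENNReal.ofReal ε} :=
  statement8_general d G P hP t hmeas hlaw hindep σ ε n n₀ hn₀ hn w

end FPP
end

section
/- Let d ≥ 2, M > 0, ε > 0 and n ≥ 1. Let (f_in(y))_{y∈{1,…,n}^{d−1}} be real numbers with −M ≤ f_in(y) ≤ ε for every y, and such that for every i ∈ {0,…,d−2} and every y ∈ {1,…,n}^i, either Σ_{x∈{1,…,n}^{d−1−i}} f_in(y,x) ≥ 0, or |f_in(y,x) − f_in(y,z)| ≤ ε for all x, z ∈ {1,…,n}^{d−1−i}. Then there exists a stream f : 𝔼^d → ℝ^d such that: (i) f(e) = 0 for every edge e not belonging to [0,(d−1)n)×[1,n]^{d−1}; (ii) for every edge e parallel to e₁, −M ≤ f(e)·e₁ ≤ ε, and ‖f(e)‖₂ ≤ ε for every other edge; (iii) f(⟨(0,y),(1,y)⟩) = f_in(y)·e₁ and f(⟨((d−1)n−1,y),((d−1)n,y)⟩) = (n^{−(d−1)} Σ_{z∈{1,…,n}^{d−1}} f_in(z))·e₁ for every y ∈ {1,…,n}^{d−1}; (iv) the node law holds at every vertex of ℤ^d ∖ (({0}×{1,…,n}^{d−1}) ∪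 ({(d−1)n}×{1,…,n}^{d−1})). -/
/-!
Write `g_j(y)` for the average of `f_in` over the points of the box `{1,…,n}^{d₀}` that agree
with `y` in their first `j` coordinates, so that `g_{d₀} = f_in` and `g_0` is the global average.
The stream crosses `d₀` slabs of `n` layers each, and each slab mixes one coordinate `j`: along
`e₁` it interpolates linearly from `g_{j+1}` to `g_j`, and the defect of the node law in each
layer is carried along `e_{j+1}` by the transverse stream
`(n - 1)⁻¹ ∑_{u ≤ y_j} (g_{j+1}(y[j := u]) - g_j(y))`, which vanishes at both faces `y_j = 0, n`.
The longitudinal values are convex combinations of averages, hence lie in `[-M, ε]`. Under either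
alternative of the hypothesis the increments `g_{j+1}(y[j := u]) - g_j(y)` are at most `ε`, and
since they sum to zero every partial sum is at most `(n - 1) ε` in absolute value.
-/

open scoped ENNReal

namespace FPP

/-- the index box `{1,…,n}^{d-1}` (here `d = d₀ + 1`) -/
noncomputable def boxIdx (d₀ n : ℕ) : Finset (Fin d₀ → ℤ) :=
  Finset.Icc (fun _ => (1 : ℤ)) (fun _ => (n : ℤ))

/-- left endpoint of an edge in the box `[0,m) × [1,n]^{d-1}` -/
def inBoxEdge (d₀ : ℕ) (m n : ℕ) (e : Edge (d₀ + 1)) : Prop :=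
  0 ≤ e.1 0 ∧ e.1 0 < (m : ℤ) ∧ ∀ k : Fin d₀, 1 ≤ e.1 k.succ ∧ e.1 k.succ ≤ (n : ℤ)

open Finset Function

section Cylinders

variable {d₀ n j : ℕ} {y : Fin d₀ → ℤ}

lemma mem_boxIdx : y ∈ boxIdx d₀ n ↔ ∀ k, 1 ≤ y k ∧ y k ≤ (n : ℤ) := by
  simp [boxIdx, Pi.le_def, forall_and]

lemma update_mem_boxIdx (hy : y ∈ boxIdx d₀ n) (k : Fin d₀) {u : ℤ} (hu : u ∈ Icc (1 : ℤ) n) :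
    update y k u ∈ boxIdx d₀ n := by
  rw [mem_boxIdx] at hy ⊢
  intro i
  rcases eq_or_ne i k with rfl | hik
  · simpa using hu
  · simpa [update_of_ne hik] using hy i

noncomputable def cylinder (n j : ℕ) (y : Fin d₀ → ℤ) : Finset (Fin d₀ → ℤ) :=
  (boxIdx d₀ n).filter fun x => ∀ k : Fin d₀, (k : ℕ) < j → x k = y k

lemma cylinder_subset_boxIdx : cylinder n j y ⊆ boxIdx d₀ n := filter_subset _ _

lemma cylinder_zero : cylinder n 0 y = boxIdx d₀ n := by
  simp [cylinder]

lemma cylinder_self (hy : y ∈ boxIdx d₀ n) : cylinder n d₀ y = {y} := by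
  ext x
  simp only [cylinder, mem_filter, mem_singleton]
  constructor
  · exact fun ⟨_, h⟩ => funext fun k => h k k.isLt
  · rintro rfl
    exact ⟨hy, fun _ _ => rfl⟩

lemma cylinder_update_of_le {k : Fin d₀} (hjk : j ≤ k) (v : ℤ) :
    cylinder n j (update y k v) = cylinder n j y := by
  refine filter_congr fun x _ => forall_congr' fun i => imp_congr_right fun hi => ?_
  rw [update_of_ne (Fin.ne_of_lt (by omega : (i : ℕ) < k))]

lemma filter_cylinder_eq (k : Fin d₀) (y : Fin d₀ → ℤ) (u : ℤ) :
    (cylinder n k y).filter (fun x => x k = u) = cylinder n (k + 1) (update y k u) := by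
  ext x
  simp only [cylinder, mem_filter, and_assoc]
  refine and_congr_right fun _ => ⟨fun ⟨hlt, hk⟩ i hi => ?_, fun h => ⟨fun i hi => ?_, ?_⟩⟩
  · rcases eq_or_ne i k with rfl | hik
    · simpa using hk
    · rw [update_of_ne hik]
      exact hlt i (by have := Fin.val_ne_of_ne hik; omega)
  · simpa [update_of_ne (Fin.ne_of_lt hi)] using h i (by omega)
  · simpa using h k (by omega)

lemma cylinder_succ_subset (k : Fin d₀) (y : Fin d₀ → ℤ) (u : ℤ) :
    cylinder n (k + 1) (update y k u) ⊆ cylinder n k y := by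
  rw [← filter_cylinder_eq]
  exact filter_subset _ _

lemma sum_cylinder_eq_sum_sum_succ {β : Type*} [AddCommMonoid β] (g : (Fin d₀ → ℤ) → β)
    (k : Fin d₀) (y : Fin d₀ → ℤ) :
    ∑ x ∈ cylinder n k y, g x
      = ∑ u ∈ Icc (1 : ℤ) n, ∑ x ∈ cylinder n (k + 1) (update y k u), g x := by
  rw [← sum_fiberwise_of_maps_to (g := fun x => x k) (t := Icc (1 : ℤ) n)]
  · simp only [filter_cylinder_eq]
  · intro x hx
    exact mem_Icc.2 (mem_boxIdx.1 (cylinder_subset_boxIdx hx) k)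

lemma card_cylinder (hy : y ∈ boxIdx d₀ n) (hj : j ≤ d₀) : #(cylinder n j y) = n ^ (d₀ - j) := by
  induction hdj : d₀ - j generalizing j y with
  | zero => simp [show j = d₀ by omega, cylinder_self hy]
  | succ t ih =>
    rw [card_eq_sum_ones, sum_cylinder_eq_sum_sum_succ _ ⟨j, by omega⟩]
    simp only [← card_eq_sum_ones]
    rw [sum_congr rfl fun u hu => ih (update_mem_boxIdx hy _ hu) (by omega) (by omega)]
    simp [pow_succ']

end Cylinders

/-- `g_j(y)`. The divisor is `#(cylinder n j y)` only for `y` in the box (`card_cylinder`). -/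
noncomputable def partialAvg {d₀ : ℕ} (n : ℕ) (f : (Fin d₀ → ℤ) → ℝ) (j : ℕ) (y : Fin d₀ → ℤ) : ℝ :=
  (∑ x ∈ cylinder n j y, f x) / (n : ℝ) ^ (d₀ - j)

section PartialAverages

variable {d₀ n j : ℕ} {f : (Fin d₀ → ℤ) → ℝ} {y : Fin d₀ → ℤ}

lemma partialAvg_update_of_le {k : Fin d₀} (hjk : j ≤ k) (v : ℤ) :
    partialAvg n f j (update y k v) = partialAvg n f j y := by
  rw [partialAvg, partialAvg, cylinder_update_of_le hjk]

lemma partialAvg_self (hy : y ∈ boxIdx d₀ n) : partialAvg n f d₀ y = f y := by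
  simp [partialAvg, cylinder_self hy]

lemma partialAvg_zero : partialAvg n f 0 y = 1 / (n : ℝ) ^ d₀ * ∑ x ∈ boxIdx d₀ n, f x := by
  rw [partialAvg, cylinder_zero, Nat.sub_zero, one_div_mul_eq_div]

lemma sum_partialAvg_succ (hn : 0 < n) (k : Fin d₀) (y : Fin d₀ → ℤ) :
    ∑ u ∈ Icc (1 : ℤ) n, partialAvg n f (k + 1) (update y k u) = n * partialAvg n f k y := by
  have hpow : (n : ℝ) ^ (d₀ - k) = n * (n : ℝ) ^ (d₀ - (k + 1)) := by
    rw [← pow_succ', show d₀ - (k + 1) + 1 = d₀ - k by omega]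
  have hn' : (n : ℝ) ≠ 0 := by positivity
  simp only [partialAvg, ← sum_div, ← sum_cylinder_eq_sum_sum_succ, hpow]
  field_simp

lemma partialAvg_le (hn : 0 < n) (hy : y ∈ boxIdx d₀ n) (hj : j ≤ d₀) {c : ℝ}
    (h : ∀ x ∈ cylinder n j y, f x ≤ c) : partialAvg n f j y ≤ c := by
  have := sum_le_card_nsmul _ _ _ h
  rw [card_cylinder hy hj, nsmul_eq_mul, Nat.cast_pow] at this
  rw [partialAvg, div_le_iff₀ (by positivity)]
  linarith

lemma le_partialAvg (hn : 0 < n) (hy : y ∈ boxIdx d₀ n) (hj : j ≤ d₀) {c : ℝ}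
    (h : ∀ x ∈ cylinder n j y, c ≤ f x) : c ≤ partialAvg n f j y := by
  have := card_nsmul_le_sum _ _ _ h
  rw [card_cylinder hy hj, nsmul_eq_mul, Nat.cast_pow] at this
  rw [partialAvg, le_div_iff₀ (by positivity)]
  linarith

end PartialAverages

lemma abs_sum_Icc_le_of_sum_eq_zero {b : ℤ → ℝ} {N t : ℤ} {ε : ℝ} (hε : 0 ≤ ε)
    (hb : ∀ u ∈ Icc 1 N, b u ≤ ε) (hsum : ∑ u ∈ Icc 1 N, b u = 0) (ht : t ∈ Icc 1 (N - 1)) :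
    |∑ u ∈ Icc 1 t, b u| ≤ (N - 1) * ε := by
  rw [mem_Icc] at ht
  have hsub : Icc 1 t ⊆ Icc 1 N := Icc_subset_Icc le_rfl (by omega)
  have hcard : ∀ s : ℤ, 0 ≤ s → (#(Icc 1 s) : ℝ) = s := fun s hs => by
    exact_mod_cast (Int.card_Icc_of_le 1 s (by omega)).trans (by ring)
  have hcard' : (#(Icc 1 N \ Icc 1 t) : ℝ) = N - t := by
    rw [card_sdiff_of_subset hsub, Nat.cast_sub (card_le_card hsub), hcard N (by omega),
      hcard t (by omega)]
  have hle := sum_le_card_nsmul _ b ε fun u hu => hb u (hsub hu)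
  have hle' := sum_le_card_nsmul (Icc 1 N \ Icc 1 t) b ε fun u hu => hb u (sdiff_subset hu)
  rw [nsmul_eq_mul, hcard t (by omega)] at hle
  rw [nsmul_eq_mul, hcard'] at hle'
  have hsplit := sum_sdiff hsub (f := b)
  have h1 : (1 : ℝ) ≤ t := by exact_mod_cast ht.1
  have h2 : (t : ℝ) ≤ N - 1 := by exact_mod_cast ht.2
  rw [abs_le]
  constructor <;> nlinarith

/-- `n - 1` times the flux through the transverse edge from `y[k := t]` to `y[k := t + 1]` in
each inner layer of the slab that mixes coordinate `k`. -/
noncomputable def deviationSum {d₀ : ℕ} (n : ℕ) (f : (Fin d₀ → ℤ) → ℝ) (k : Fin d₀)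
    (y : Fin d₀ → ℤ) (t : ℤ) : ℝ :=
  ∑ u ∈ Icc 1 t, (partialAvg n f (k + 1) (update y k u) - partialAvg n f k y)

section DeviationSums

variable {d₀ n : ℕ} {f : (Fin d₀ → ℤ) → ℝ} {k : Fin d₀} {y : Fin d₀ → ℤ}

lemma deviationSum_update (v t : ℤ) :
    deviationSum n f k (update y k v) t = deviationSum n f k y t := by
  simp only [deviationSum, update_idem, partialAvg_update_of_le le_rfl]

lemma deviationSum_zero : deviationSum n f k y 0 = 0 := by
  simp [deviationSum]

lemma deviationSum_sub_one {t : ℤ} (ht : 1 ≤ t) :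
    deviationSum n f k y t - deviationSum n f k y (t - 1)
      = partialAvg n f (k + 1) (update y k t) - partialAvg n f k y := by
  obtain ⟨s, rfl⟩ : ∃ s, t = s + 1 := ⟨t - 1, by ring⟩
  rw [deviationSum, deviationSum, ← insert_Icc_right_eq_Icc_add_one (by omega),
    sum_insert (by simp), add_sub_cancel_right, add_sub_cancel_right]

lemma deviationSum_top (hn : 0 < n) : deviationSum n f k y n = 0 := by
  rw [deviationSum, sum_sub_distrib, sum_partialAvg_succ hn, sum_const,
    Int.card_Icc, nsmul_eq_mul]
  simp

lemma abs_deviationSum_le {ε : ℝ} (hε : 0 ≤ ε) (hn : 0 < n) (hy : y ∈ boxIdx d₀ n)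
    (hf : ∀ x ∈ boxIdx d₀ n, f x ≤ ε)
    (hmix : 0 ≤ ∑ x ∈ cylinder n k y, f x ∨
      ∀ x ∈ cylinder n k y, ∀ z ∈ cylinder n k y, |f x - f z| ≤ ε)
    {t : ℤ} (ht : t ∈ Icc 1 ((n : ℤ) - 1)) :
    |deviationSum n f k y t| ≤ ((n : ℝ) - 1) * ε := by
  have hk : (k : ℕ) ≤ d₀ := k.isLt.le
  have hdev : ∀ u ∈ Icc (1 : ℤ) n,
      partialAvg n f (k + 1) (update y k u) - partialAvg n f k y ≤ ε := by
    intro u hu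
    have hyu := update_mem_boxIdx hy k hu
    rcases hmix with hpos | hclose
    · have h1 : partialAvg n f (k + 1) (update y k u) ≤ ε :=
        partialAvg_le hn hyu k.isLt fun x hx => hf x (cylinder_subset_boxIdx hx)
      have h2 : 0 ≤ partialAvg n f k y := div_nonneg hpos (by positivity)
      linarith
    · have h1 : ∀ x ∈ cylinder n k y, f x - ε ≤ partialAvg n f k y := fun x hx =>
        le_partialAvg hn hy hk fun z hz => by linarith [(abs_le.1 (hclose x hx z hz)).2]
      have h2 : partialAvg n f (k + 1) (update y k u) ≤ partialAvg n f k y + ε :=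
        partialAvg_le hn hyu k.isLt fun x hx => by
          linarith [h1 x (cylinder_succ_subset k y u hx)]
      linarith
  have := abs_sum_Icc_le_of_sum_eq_zero hε hdev ?_ ht
  · rwa [Int.cast_natCast] at this
  simpa [deviationSum] using deviationSum_top (f := f) (k := k) (y := y) hn

end DeviationSums

/-- For `n = 1` the slab has the single layer `s = 0`, and `s / (n - 1) = 0 / 0 = 0`. -/
noncomputable def mixProfile {d₀ : ℕ} (n : ℕ) (f : (Fin d₀ → ℤ) → ℝ) (j : ℕ) (s : ℤ)
    (y : Fin d₀ → ℤ) : ℝ :=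
  partialAvg n f (j + 1) y + s / ((n : ℝ) - 1) * (partialAvg n f j y - partialAvg n f (j + 1) y)

section MixProfile

variable {d₀ n j : ℕ} {f : (Fin d₀ → ℤ) → ℝ} {y : Fin d₀ → ℤ}

lemma mixProfile_zero : mixProfile n f j 0 y = partialAvg n f (j + 1) y := by
  simp [mixProfile]

lemma mixProfile_last (hn : 0 < n) (hy : y ∈ boxIdx d₀ n) (hj : j < d₀) :
    mixProfile n f j ((n : ℤ) - 1) y = partialAvg n f j y := by
  rcases (Nat.one_le_iff_ne_zero.2 hn.ne').eq_or_lt with rfl | hn1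
  · have hsum := sum_partialAvg_succ (f := f) hn ⟨j, hj⟩ y
    have hyj : y ⟨j, hj⟩ = 1 := by have := mem_boxIdx.1 hy ⟨j, hj⟩; omega
    rw [Nat.cast_one, Icc_self, sum_singleton, ← hyj, update_eq_self] at hsum
    simp [mixProfile, hsum]
  · have : ((n : ℝ) - 1) / ((n : ℝ) - 1) = 1 :=
      div_self (sub_ne_zero.2 (by exact_mod_cast hn1.ne'))
    simp only [mixProfile, Int.cast_sub, Int.cast_natCast, Int.cast_one, this]
    ring

lemma mixProfile_sub_one (s : ℤ) :
    mixProfile n f j s y - mixProfile n f j (s - 1) y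
      = (partialAvg n f j y - partialAvg n f (j + 1) y) / ((n : ℝ) - 1) := by
  simp only [mixProfile, Int.cast_sub, Int.cast_one]
  ring

lemma mixProfile_mem {M ε : ℝ} (hn : 0 < n) (hf : ∀ x ∈ boxIdx d₀ n, -M ≤ f x ∧ f x ≤ ε)
    (hy : y ∈ boxIdx d₀ n) (hj : j < d₀) {s : ℤ} (hs : s ∈ Icc 0 ((n : ℤ) - 1)) :
    -M ≤ mixProfile n f j s y ∧ mixProfile n f j s y ≤ ε := by
  have hbounds : ∀ i ≤ d₀, -M ≤ partialAvg n f i y ∧ partialAvg n f i y ≤ ε := fun i hi =>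
    ⟨le_partialAvg hn hy hi fun x hx => (hf x (cylinder_subset_boxIdx hx)).1,
      partialAvg_le hn hy hi fun x hx => (hf x (cylinder_subset_boxIdx hx)).2⟩
  have hw : 0 ≤ (s : ℝ) / ((n : ℝ) - 1) ∧ (s : ℝ) / ((n : ℝ) - 1) ≤ 1 := by
    rw [mem_Icc] at hs
    rcases eq_or_lt_of_le hs.1 with rfl | hs0
    · simp
    have hn1 : (0 : ℝ) < n - 1 := by
      have : (1 : ℤ) < n := by omega
      have : (1 : ℝ) < n := by exact_mod_cast this
      linarith
    refine ⟨div_nonneg (by exact_mod_cast hs.1) hn1.le, (div_le_one hn1).2 ?_⟩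
    exact_mod_cast hs.2
  obtain ⟨h1, h2⟩ := hbounds j hj.le
  obtain ⟨h3, h4⟩ := hbounds (j + 1) hj
  unfold mixProfile
  constructor <;> nlinarith

end MixProfile

/-- The coordinates are mixed from the last to the first, so that the first slab starts from
`g_{d₀} = f` and the last one ends at the global average `g_0`. -/
def mixCoord (d₀ n : ℕ) (z₀ : ℤ) : ℕ := d₀ - 1 - (z₀ / n).toNat

noncomputable def longFlow {d₀ : ℕ} (n : ℕ) (f : (Fin d₀ → ℤ) → ℝ) (z₀ : ℤ) (y : Fin d₀ → ℤ) :
    ℝ :=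
  mixProfile n f (mixCoord d₀ n z₀) (z₀ % n) y

noncomputable def transFlow {d₀ : ℕ} (n : ℕ) (f : (Fin d₀ → ℤ) → ℝ) (z₀ : ℤ) (y : Fin d₀ → ℤ)
    (k : Fin d₀) : ℝ :=
  if 1 ≤ z₀ % n ∧ (k : ℕ) = mixCoord d₀ n z₀ then deviationSum n f k y (y k) / ((n : ℝ) - 1)
  else 0

open Classical in
noncomputable def mixingStream {d₀ : ℕ} (n : ℕ) (f : (Fin d₀ → ℤ) → ℝ) : Streamm (d₀ + 1) :=
  fun e =>
    if inBoxEdge d₀ (d₀ * n) n e then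
      if h : e.2 = 0 then longFlow n f (e.1 0) (Fin.tail e.1)
      else transFlow n f (e.1 0) (Fin.tail e.1) (e.2.pred h)
    else 0

section Unshift

variable {d : ℕ} (z : Fin (d + 1) → ℤ)

lemma unshift_zero_apply_zero : unshift z 0 0 = z 0 - 1 := by
  simp [unshift]

lemma tail_unshift_zero : Fin.tail (unshift z 0) = Fin.tail z := by
  funext k
  simp [unshift, Fin.tail, Fin.succ_ne_zero]

lemma unshift_succ_apply_zero (k : Fin d) : unshift z k.succ 0 = z 0 := by
  simp [unshift, (Fin.succ_ne_zero k).symm]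

lemma tail_unshift_succ (k : Fin d) :
    Fin.tail (unshift z k.succ) = update (Fin.tail z) k (Fin.tail z k - 1) := by
  funext i
  rcases eq_or_ne i k with rfl | hik
  · simp [unshift, Fin.tail]
  · simp [unshift, Fin.tail, hik]

end Unshift

section MixingStream

variable {d₀ n : ℕ} {f : (Fin d₀ → ℤ) → ℝ} {M ε : ℝ}

lemma inBoxEdge_iff {m : ℕ} {z : Fin (d₀ + 1) → ℤ} {i : Fin (d₀ + 1)} :
    inBoxEdge d₀ m n (z, i) ↔ 0 ≤ z 0 ∧ z 0 < m ∧ Fin.tail z ∈ boxIdx d₀ n := by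
  simp [inBoxEdge, mem_boxIdx, Fin.tail]

lemma mixingStream_of_not_inBoxEdge {e : Edge (d₀ + 1)} (he : ¬inBoxEdge d₀ (d₀ * n) n e) :
    mixingStream n f e = 0 :=
  if_neg he

lemma mixingStream_zero {z : Fin (d₀ + 1) → ℤ} (hz : inBoxEdge d₀ (d₀ * n) n (z, 0)) :
    mixingStream n f (z, 0) = longFlow n f (z 0) (Fin.tail z) := by
  rw [mixingStream, if_pos hz, dif_pos rfl]

lemma mixingStream_succ {z : Fin (d₀ + 1) → ℤ} (k : Fin d₀)
    (hz : inBoxEdge d₀ (d₀ * n) n (z, k.succ)) :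
    mixingStream n f (z, k.succ) = transFlow n f (z 0) (Fin.tail z) k := by
  rw [mixingStream, if_pos hz, dif_neg k.succ_ne_zero, Fin.pred_succ]

lemma mixCoord_lt (hd : 1 ≤ d₀) (z₀ : ℤ) : mixCoord d₀ n z₀ < d₀ := by
  unfold mixCoord
  omega

lemma emod_mem_Icc (hn : 0 < n) (z₀ : ℤ) : z₀ % n ∈ Icc 0 ((n : ℤ) - 1) := by
  have := Int.emod_lt_of_pos z₀ (by exact_mod_cast hn : (0 : ℤ) < n)
  exact mem_Icc.2 ⟨Int.emod_nonneg _ (by omega), by omega⟩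

lemma mixingStream_zero_mem (hd : 1 ≤ d₀) (hn : 0 < n) (hM : 0 ≤ M) (hε : 0 ≤ ε)
    (hf : ∀ x ∈ boxIdx d₀ n, -M ≤ f x ∧ f x ≤ ε) (z : Fin (d₀ + 1) → ℤ) :
    -M ≤ mixingStream n f (z, 0) ∧ mixingStream n f (z, 0) ≤ ε := by
  by_cases hz : inBoxEdge d₀ (d₀ * n) n (z, 0)
  · rw [mixingStream_zero hz]
    exact mixProfile_mem hn hf (inBoxEdge_iff.1 hz).2.2 (mixCoord_lt hd _) (emod_mem_Icc hn _)
  · rw [mixingStream_of_not_inBoxEdge hz]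
    exact ⟨by linarith, hε⟩

lemma abs_mixingStream_succ_le (hn : 0 < n) (hε : 0 ≤ ε) (hf : ∀ x ∈ boxIdx d₀ n, f x ≤ ε)
    (hmix : ∀ (k : Fin d₀) (y : Fin d₀ → ℤ), 0 ≤ ∑ x ∈ cylinder n k y, f x ∨
      ∀ x ∈ cylinder n k y, ∀ z ∈ cylinder n k y, |f x - f z| ≤ ε)
    (z : Fin (d₀ + 1) → ℤ) (k : Fin d₀) : |mixingStream n f (z, k.succ)| ≤ ε := by
  by_cases hz : inBoxEdge d₀ (d₀ * n) n (z, k.succ)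
  · have hy := (inBoxEdge_iff.1 hz).2.2
    rw [mixingStream_succ k hz, transFlow]
    split_ifs with hgate
    · have hn1 : (0 : ℝ) < n - 1 := by
        have : (1 : ℤ) < n := by linarith [(mem_Icc.1 (emod_mem_Icc hn (z 0))).2]
        have : (1 : ℝ) < n := by exact_mod_cast this
        linarith
      rw [abs_div, abs_of_pos hn1, div_le_iff₀ hn1]
      have hyk := mem_boxIdx.1 hy k
      rcases eq_or_lt_of_le hyk.2 with h | h
      · rw [h, deviationSum_top hn, abs_zero]
        positivity
      · linarith [abs_deviationSum_le hε hn hy hf (hmix k _) (mem_Icc.2 ⟨hyk.1, by omega⟩)]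
    · simpa using hε
  · rw [mixingStream_of_not_inBoxEdge hz]
    simpa using hε

lemma longFlow_zero (hd : 1 ≤ d₀) {y : Fin d₀ → ℤ} (hy : y ∈ boxIdx d₀ n) :
    longFlow n f 0 y = f y := by
  simp [longFlow, mixCoord, mixProfile_zero, Nat.sub_add_cancel hd, partialAvg_self hy]

lemma longFlow_last (hd : 1 ≤ d₀) (hn : 0 < n) {y : Fin d₀ → ℤ} (hy : y ∈ boxIdx d₀ n) :
    longFlow n f ((d₀ * n : ℕ) - 1 : ℤ) y = 1 / (n : ℝ) ^ d₀ * ∑ x ∈ boxIdx d₀ n, f x := by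
  have hn' : (0 : ℤ) < n := by exact_mod_cast hn
  obtain ⟨hq, hr⟩ := (Int.ediv_emod_unique hn' (a := ((d₀ * n : ℕ) - 1 : ℤ)) (q := d₀ - 1)
    (r := n - 1)).2 ⟨by push_cast; ring, by omega, by omega⟩
  rw [longFlow, mixCoord, hq, hr, show d₀ - 1 - ((d₀ : ℤ) - 1).toNat = 0 by omega,
    mixProfile_last hn hy (by omega), partialAvg_zero]

end MixingStream

section NodeLaw

variable {d₀ n : ℕ} {f : (Fin d₀ → ℤ) → ℝ}

/-- Across a slab boundary (`z₀ % n = 0`) both sides carry `g_{j+1}`. -/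
lemma longFlow_sub_one (hn : 0 < n) {y : Fin d₀ → ℤ} (hy : y ∈ boxIdx d₀ n)
    {z₀ : ℤ} (h0 : 0 < z₀) (hD : z₀ < d₀ * n) :
    longFlow n f z₀ y - longFlow n f (z₀ - 1) y
      = if 1 ≤ z₀ % n then
          (partialAvg n f (mixCoord d₀ n z₀) y - partialAvg n f (mixCoord d₀ n z₀ + 1) y)
            / ((n : ℝ) - 1)
        else 0 := by
  have hn' : (0 : ℤ) < n := by exact_mod_cast hn
  have hqr := ((Int.ediv_emod_unique hn' (a := z₀)).1 ⟨rfl, rfl⟩).1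
  have hr := mem_Icc.1 (emod_mem_Icc hn z₀)
  have hq0 : 0 ≤ z₀ / n := by nlinarith
  have hqd : z₀ / n < d₀ := by nlinarith
  split_ifs with hs
  · obtain ⟨hq, hr'⟩ := (Int.ediv_emod_unique hn' (a := z₀ - 1) (q := z₀ / n)
      (r := z₀ % n - 1)).2 ⟨by linarith, by omega, by omega⟩
    rw [longFlow, longFlow, mixCoord, mixCoord, hq, hr', mixProfile_sub_one]
  · obtain ⟨hq, hr'⟩ := (Int.ediv_emod_unique hn' (a := z₀ - 1) (q := z₀ / n - 1)
      (r := n - 1)).2 ⟨by linarith, by omega, by nlinarith⟩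
    have hq1 : 1 ≤ z₀ / n := by nlinarith
    rw [longFlow, longFlow, hr', show z₀ % n = 0 by omega, mixProfile_zero, mixCoord, mixCoord, hq,
      show d₀ - 1 - (z₀ / n - 1).toNat = d₀ - 1 - (z₀ / n).toNat + 1 by omega,
      mixProfile_last hn hy (by omega), sub_self]

lemma sum_transFlow_sub (hd : 1 ≤ d₀) {y : Fin d₀ → ℤ} (hy : y ∈ boxIdx d₀ n) (z₀ : ℤ) :
    ∑ k, (transFlow n f z₀ y k - transFlow n f z₀ (update y k (y k - 1)) k)
      = if 1 ≤ z₀ % n then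
          (partialAvg n f (mixCoord d₀ n z₀ + 1) y - partialAvg n f (mixCoord d₀ n z₀) y)
            / ((n : ℝ) - 1)
        else 0 := by
  have hterm : ∀ k, transFlow n f z₀ y k - transFlow n f z₀ (update y k (y k - 1)) k
      = if 1 ≤ z₀ % n ∧ (k : ℕ) = mixCoord d₀ n z₀ then
          (partialAvg n f (k + 1) y - partialAvg n f k y) / ((n : ℝ) - 1)
        else 0 := by
    intro k
    simp only [transFlow, update_self, deviationSum_update]
    split_ifs
    · rw [← sub_div, deviationSum_sub_one (mem_boxIdx.1 hy k).1, update_eq_self]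
    · rw [sub_zero]
  rw [sum_congr rfl fun k _ => hterm k,
    Fintype.sum_eq_single ⟨_, mixCoord_lt hd z₀⟩ fun k hk => if_neg fun h => hk (Fin.ext h.2)]
  simp

lemma mixingStream_unshift_succ {z : Fin (d₀ + 1) → ℤ} (hz : inBoxEdge d₀ (d₀ * n) n (z, 0))
    (k : Fin d₀) :
    mixingStream n f (unshift z k.succ, k.succ)
      = transFlow n f (z 0) (update (Fin.tail z) k (Fin.tail z k - 1)) k := by
  obtain ⟨h0, hD, hy⟩ := inBoxEdge_iff.1 hz
  have hyk := mem_boxIdx.1 hy k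
  by_cases h1 : Fin.tail z k = 1
  · rw [mixingStream_of_not_inBoxEdge]
    · simp [transFlow, h1, deviationSum_zero]
    · rw [inBoxEdge_iff, tail_unshift_succ]
      rintro ⟨-, -, h⟩
      simpa [h1] using mem_boxIdx.1 h k
  · rw [mixingStream_succ, unshift_succ_apply_zero, tail_unshift_succ]
    rw [inBoxEdge_iff, unshift_succ_apply_zero, tail_unshift_succ]
    exact ⟨h0, hD, update_mem_boxIdx hy k (mem_Icc.2 ⟨by omega, by omega⟩)⟩

lemma mixingStream_unshift_succ_of_not_inBoxEdge (hn : 0 < n) {z : Fin (d₀ + 1) → ℤ}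
    (hz : ¬inBoxEdge d₀ (d₀ * n) n (z, 0)) (k : Fin d₀) :
    mixingStream n f (unshift z k.succ, k.succ) = 0 := by
  by_cases h : inBoxEdge d₀ (d₀ * n) n (unshift z k.succ, k.succ)
  · rw [mixingStream_succ k h, unshift_succ_apply_zero, tail_unshift_succ]
    rw [inBoxEdge_iff, unshift_succ_apply_zero, tail_unshift_succ] at h
    obtain ⟨h0, hD, hy⟩ := h
    have hyk := mem_boxIdx.1 hy k
    rw [update_self] at hyk
    -- `z` leaves the box only through the face `z k.succ = n + 1`, where the flux vanishes
    have hk : Fin.tail z k - 1 = n := by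
      refine (eq_or_lt_of_le hyk.2).resolve_right fun hlt => hz (inBoxEdge_iff.2 ⟨h0, hD, ?_⟩)
      have := update_mem_boxIdx hy k (u := Fin.tail z k) (mem_Icc.2 ⟨by omega, by omega⟩)
      rwa [update_idem, update_eq_self] at this
    simp [transFlow, hk, deviationSum_top hn]
  · exact mixingStream_of_not_inBoxEdge h

lemma nodeLaw_mixingStream_of_inBoxEdge (hd : 1 ≤ d₀) (hn : 0 < n) {z : Fin (d₀ + 1) → ℤ}
    (hz : inBoxEdge d₀ (d₀ * n) n (z, 0)) (h0 : z 0 ≠ 0) : nodeLaw (mixingStream n f) z := by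
  obtain ⟨hz0, hD, hy⟩ := inBoxEdge_iff.1 hz
  have hz' : inBoxEdge d₀ (d₀ * n) n (unshift z 0, 0) := by
    rw [inBoxEdge_iff, unshift_zero_apply_zero, tail_unshift_zero]
    exact ⟨by omega, by omega, hy⟩
  rw [nodeLaw, Fin.sum_univ_succ, mixingStream_zero hz, mixingStream_zero hz',
    unshift_zero_apply_zero, tail_unshift_zero,
    sum_congr rfl fun k _ => by rw [mixingStream_succ k hz, mixingStream_unshift_succ hz k]]
  rw [longFlow_sub_one hn hy (by omega) (by exact_mod_cast hD)]
  rw [sum_transFlow_sub hd hy]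
  split_ifs <;> ring

lemma nodeLaw_mixingStream_of_not_inBoxEdge (hn : 0 < n) {z : Fin (d₀ + 1) → ℤ}
    (hz : ¬inBoxEdge d₀ (d₀ * n) n (z, 0))
    (hD : ¬(z 0 = (d₀ * n : ℕ) ∧ Fin.tail z ∈ boxIdx d₀ n)) : nodeLaw (mixingStream n f) z := by
  have hz' : ¬inBoxEdge d₀ (d₀ * n) n (unshift z 0, 0) := by
    rw [inBoxEdge_iff, unshift_zero_apply_zero, tail_unshift_zero]
    rintro ⟨h1, h2, hy⟩
    rcases lt_or_eq_of_le (show z 0 ≤ (d₀ * n : ℕ) by omega) with h | h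
    · exact hz (inBoxEdge_iff.2 ⟨by omega, h, hy⟩)
    · exact hD ⟨h, hy⟩
  rw [nodeLaw, Fin.sum_univ_succ, mixingStream_of_not_inBoxEdge hz,
    mixingStream_of_not_inBoxEdge hz']
  simp [sum_eq_zero fun k _ => mixingStream_of_not_inBoxEdge (e := (z, Fin.succ k)) hz,
    mixingStream_unshift_succ_of_not_inBoxEdge hn hz]

end NodeLaw

/-- Lemma 4.4, precise mixing.  `d = d₀ + 1 ≥ 2`.  Let `-M ≤ f_in ≤ ε`
on `{1,…,n}^{d-1}`, and assume that for every `i ∈ {0,…,d-2}` and every fixing `y` of the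
first `i` coordinates, either the partial sum of `f_in` over the remaining coordinates is
nonnegative, or all the corresponding values of `f_in` are within `ε` of each other.  Then
there is a stream `f` supported in `[0,(d-1)n) × [1,n]^{d-1}`, with `-M ≤ f(e)·e₁ ≤ ε` on
edges parallel to `e₁` and `‖f(e)‖₂ ≤ ε` on the other edges, with inputs `f_in` and uniform
outputs `n^{-(d-1)} ∑ f_in`, satisfying the node law at every vertex outside
`({0} ∪ {(d-1)n}) × {1,…,n}^{d-1}`. -/
theorem statement18 (d₀ : ℕ) (hd : 1 ≤ d₀) (M ε : ℝ) (hM : 0 < M) (hε : 0 < ε)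
    (n : ℕ) (hn : 1 ≤ n) (fin : (Fin d₀ → ℤ) → ℝ)
    (hrange : ∀ y ∈ boxIdx d₀ n, -M ≤ fin y ∧ fin y ≤ ε)
    (hcond : ∀ i : Fin d₀, ∀ y : Fin d₀ → ℤ,
      (0 ≤ ∑ x ∈ (boxIdx d₀ n).filter (fun x => ∀ k, k < i → x k = y k), fin x) ∨
      (∀ x ∈ (boxIdx d₀ n).filter (fun x => ∀ k, k < i → x k = y k),
       ∀ z ∈ (boxIdx d₀ n).filter (fun x => ∀ k, k < i → x k = y k),
        |fin x - fin z| ≤ ε)) :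
    ∃ F : Streamm (d₀ + 1),
      (∀ e : Edge (d₀ + 1), ¬inBoxEdge d₀ (d₀ * n) n e → F e = 0) ∧
      (∀ e : Edge (d₀ + 1),
        (e.2 = 0 → -M ≤ F e ∧ F e ≤ ε) ∧ (e.2 ≠ 0 → |F e| ≤ ε)) ∧
      (∀ y ∈ boxIdx d₀ n,
        F (Fin.cons 0 y, 0) = fin y ∧
        F (Fin.cons ((d₀ * n : ℕ) - 1 : ℤ) y, 0)
          = (1 / (n : ℝ) ^ d₀) * ∑ z ∈ boxIdx d₀ n, fin z) ∧
      (∀ z : Fin (d₀ + 1) → ℤ,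
        ¬(z 0 = 0 ∧ ∀ k : Fin d₀, 1 ≤ z k.succ ∧ z k.succ ≤ (n : ℤ)) →
        ¬(z 0 = (d₀ * n : ℕ) ∧ ∀ k : Fin d₀, 1 ≤ z k.succ ∧ z k.succ ≤ (n : ℤ)) →
        nodeLaw F z) := by
  have hmix : ∀ (k : Fin d₀) (y : Fin d₀ → ℤ), 0 ≤ ∑ x ∈ cylinder n k y, fin x ∨
      ∀ x ∈ cylinder n k y, ∀ z ∈ cylinder n k y, |fin x - fin z| ≤ ε := hcond
  refine ⟨mixingStream n fin, fun e he => mixingStream_of_not_inBoxEdge he,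
    fun ⟨z, i⟩ => ⟨?_, fun hi => ?_⟩, fun y hy => ?_, fun z h0 hD => ?_⟩
  · rintro rfl
    exact mixingStream_zero_mem hd hn hM.le hε.le hrange z
  · obtain ⟨k, rfl⟩ := Fin.exists_succ_eq.2 hi
    exact abs_mixingStream_succ_le hn hε.le (fun x hx => (hrange x hx).2) hmix z k
  · have hz : ∀ t : ℤ, 0 ≤ t → t < (d₀ * n : ℕ) → inBoxEdge d₀ (d₀ * n) n (Fin.cons t y, 0) :=
      fun t h0 ht => inBoxEdge_iff.2 ⟨h0, ht, by rwa [Fin.tail_cons]⟩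
    have hdn : 1 ≤ d₀ * n := Nat.one_le_iff_ne_zero.2 (by positivity)
    rw [mixingStream_zero (hz 0 le_rfl (by omega)), mixingStream_zero (hz _ (by omega) (by omega))]
    simp only [Fin.cons_zero, Fin.tail_cons]
    exact ⟨longFlow_zero hd hy, longFlow_last hd hn hy⟩
  · by_cases hz : inBoxEdge d₀ (d₀ * n) n (z, 0)
    · exact nodeLaw_mixingStream_of_inBoxEdge hd hn hz
        fun h => h0 ⟨h, mem_boxIdx.1 (inBoxEdge_iff.1 hz).2.2⟩
    · exact nodeLaw_mixingStream_of_not_inBoxEdge hn hz fun h => hD ⟨h.1, mem_boxIdx.1 h.2⟩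

end FPP
end
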